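/- Let M, K ≥ 1, let h_1, …, h_K ∈ ℂ^M be nonzero, let γ̄_k > 0 for each k, and let λ_1, …, λ_M : ℝ_{+}^K → ℝ be functions each satisfying: (positivity) λ_m(β) > 0 for all β ≥ 0; (strict subhomogeneity) λ_m(α·β) < α·λ_m(β) for all α > 1 and all nonzero β ≥ 0; and (monotonicity) β₁ ≥ β₂ ≥ 0 implies λ_m(β₁) ≥ λ_m(β₂). For β ∈ ℝ_{+}^K define the Hermitian positive definite matrix C_k(β) = I_M + Σ_m λ_m(β)·E_m + Σ_{j≠k} β_j h_j h_j† and I_k(β) = γ̄_k / (h_k† C_k(β)^{-1} h_k). Then for every k: (a) I_k(β) > 0 for all β ≥ 0; (b) I_k(α·β) < α·I_k(β) for all α > 1 and all nonzero β ≥ 0; (c) β₁ ≥ β₂ ≥ 0 implies I_k(β₁) ≥ I_k(β₂). -/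

import Mathlib

open Matrix
open scoped ComplexOrder

variable {n : Type*} [Fintype n] [DecidableEq n]

lemma smul_psd {c : ℝ} (hc : 0 ≤ c) {A : Matrix n n ℂ} (hA : A.PosSemidef) :
    ((c : ℂ) • A).PosSemidef := by
  refine PosSemidef.of_dotProduct_mulVec_nonneg ?_ (fun x => ?_)
  · rw [IsHermitian, conjTranspose_smul, hA.1]
    simp [Complex.star_def, Complex.conj_ofReal]
  · rw [smul_mulVec, dotProduct_smul, smul_eq_mul]
    exact mul_nonneg (by exact_mod_cast hc) (hA.dotProduct_mulVec_nonneg x)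

lemma smul_pd {c : ℝ} (hc : 0 < c) {A : Matrix n n ℂ} (hA : A.PosDef) :
    ((c : ℂ) • A).PosDef := by
  refine PosDef.of_dotProduct_mulVec_pos (smul_psd hc.le hA.posSemidef).1 (fun x hx => ?_)
  rw [smul_mulVec, dotProduct_smul, smul_eq_mul]
  exact mul_pos (by exact_mod_cast hc) (hA.dotProduct_mulVec_pos hx)

lemma vecMulVec_psd (v : n → ℂ) : (vecMulVec v (star v)).PosSemidef := by
  have : vecMulVec v (star v) = replicateCol (Fin 1) v * (replicateCol (Fin 1) v)ᴴ := by
    rw [vecMulVec_eq (Fin 1), conjTranspose_replicateCol]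
    rfl
  rw [this]
  exact posSemidef_self_mul_conjTranspose _

lemma stdBasis_psd (m : n) : (Matrix.single m m (1 : ℂ)).PosSemidef := by
  have : Matrix.single m m (1 : ℂ) = vecMulVec (Pi.single m 1) (star (Pi.single m 1)) := by
    have hs : star (Pi.single m (1:ℂ)) = (Pi.single m 1 : n → ℂ) := by
      ext i; simp [Pi.single_apply, apply_ite (star : ℂ → ℂ)]
    rw [single_eq_single_vecMulVec_single, hs]
  rw [this]; exact vecMulVec_psd _

lemma sum_psd {ι : Type*} {s : Finset ι} {f : ι → Matrix n n ℂ}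
    (hf : ∀ i ∈ s, (f i).PosSemidef) : (∑ i ∈ s, f i).PosSemidef :=
  Finset.sum_induction f _ (fun _ _ ha hb => ha.add hb) PosSemidef.zero hf

lemma inv_quad_sub {A B : Matrix n n ℂ} (hA : A.PosDef) (hB : B.PosDef) (x : n → ℂ) :
    star x ⬝ᵥ A⁻¹ *ᵥ x - star x ⬝ᵥ B⁻¹ *ᵥ x
      = star (A⁻¹ *ᵥ x - B⁻¹ *ᵥ x) ⬝ᵥ A *ᵥ (A⁻¹ *ᵥ x - B⁻¹ *ᵥ x)
        + star (B⁻¹ *ᵥ x) ⬝ᵥ (B - A) *ᵥ (B⁻¹ *ᵥ x) := by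
  have hAd : IsUnit A.det := A.isUnit_iff_isUnit_det.mp hA.isUnit
  have hBd : IsUnit B.det := B.isUnit_iff_isUnit_det.mp hB.isUnit
  set u := A⁻¹ *ᵥ x with hu
  set v := B⁻¹ *ᵥ x with hv
  have f1 : A *ᵥ u = x := by
    rw [hu, mulVec_mulVec, Matrix.mul_nonsing_inv _ hAd, one_mulVec]
  have f2 : B *ᵥ v = x := by
    rw [hv, mulVec_mulVec, Matrix.mul_nonsing_inv _ hBd, one_mulVec]
  have e4 : star u ⬝ᵥ A *ᵥ v = star x ⬝ᵥ v := by
    rw [dotProduct_mulVec]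
    congr 1
    have := star_mulVec A u
    rw [hA.isHermitian] at this
    rw [← this, f1]
  have e5 : star x ⬝ᵥ u = star u ⬝ᵥ x := by
    rw [hu, dotProduct_mulVec]
    congr 1
    have := star_mulVec A⁻¹ x
    rw [hA.isHermitian.inv] at this
    rw [← this]
  have e6 : star x ⬝ᵥ v = star v ⬝ᵥ x := by
    rw [hv, dotProduct_mulVec]
    congr 1
    have := star_mulVec B⁻¹ x
    rw [hB.isHermitian.inv] at this
    rw [← this]
  simp only [star_sub, sub_dotProduct, dotProduct_sub, mulVec_sub, sub_mulVec, f1, f2, e4]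
  rw [e5, e6]
  ring

lemma quad_inv_le {A B : Matrix n n ℂ} (hA : A.PosDef) (hB : B.PosDef)
    (hBA : (B - A).PosSemidef) (x : n → ℂ) :
    star x ⬝ᵥ B⁻¹ *ᵥ x ≤ star x ⬝ᵥ A⁻¹ *ᵥ x := by
  rw [← sub_nonneg, inv_quad_sub hA hB x]
  exact add_nonneg (hA.posSemidef.dotProduct_mulVec_nonneg _) (hBA.dotProduct_mulVec_nonneg _)

lemma quad_inv_lt {A B : Matrix n n ℂ} (hA : A.PosDef) (hB : B.PosDef)
    (hBA : (B - A).PosDef) {x : n → ℂ} (hx : x ≠ 0) :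
    star x ⬝ᵥ B⁻¹ *ᵥ x < star x ⬝ᵥ A⁻¹ *ᵥ x := by
  rw [← sub_pos, inv_quad_sub hA hB x]
  have hv : B⁻¹ *ᵥ x ≠ 0 := by
    intro hv0
    apply hx
    have hBd : IsUnit B.det := B.isUnit_iff_isUnit_det.mp hB.isUnit
    have : B *ᵥ (B⁻¹ *ᵥ x) = x := by
      rw [mulVec_mulVec, Matrix.mul_nonsing_inv _ hBd, one_mulVec]
    rw [hv0, mulVec_zero] at this
    exact this.symm
  exact add_pos_of_nonneg_of_pos (hA.posSemidef.dotProduct_mulVec_nonneg _) (hBA.dotProduct_mulVec_pos hv)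


/-- Appendix C.1 of the paper: the dual update map
`I_k(β) = γ̄_k / (h_kᴴ C_k(β)⁻¹ h_k)` with
`C_k(β) = I + Σ_m λ_m(β) E_m + Σ_{j≠k} β_j h_j h_jᴴ`
is a standard interference mapping: positive, strictly subhomogeneous and monotone. -/
theorem stmt19 (M K : ℕ) (hM : 1 ≤ M) (hK : 1 ≤ K)
    (h : Fin K → Fin M → ℂ) (hh : ∀ k, h k ≠ 0)
    (γ : Fin K → ℝ) (hγ : ∀ k, 0 < γ k)
    (lam : Fin M → (Fin K → ℝ) → ℝ)
    (hlampos : ∀ (m : Fin M) (β : Fin K → ℝ), (∀ k, 0 ≤ β k) → 0 < lam m β)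
    (hlamsub : ∀ (m : Fin M) (α : ℝ), 1 < α → ∀ β : Fin K → ℝ, (∀ k, 0 ≤ β k) → β ≠ 0 →
      lam m (α • β) < α * lam m β)
    (hlammono : ∀ (m : Fin M) (β₁ β₂ : Fin K → ℝ), (∀ k, 0 ≤ β₂ k) → (∀ k, β₂ k ≤ β₁ k) →
      lam m β₂ ≤ lam m β₁)
    (C : (Fin K → ℝ) → Fin K → Matrix (Fin M) (Fin M) ℂ)
    (hC : ∀ β k, C β k = 1 + (∑ m, ((lam m β : ℝ) : ℂ) • Matrix.single m m (1 : ℂ))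
      + ∑ j ∈ Finset.univ.erase k, (β j : ℂ) • vecMulVec (h j) (star (h j)))
    (I : (Fin K → ℝ) → Fin K → ℝ)
    (hI : ∀ β k, I β k = γ k / (star (h k) ⬝ᵥ ((C β k)⁻¹ *ᵥ h k)).re) :
    (∀ β : Fin K → ℝ, (∀ k, 0 ≤ β k) → ∀ k, 0 < I β k) ∧
    (∀ α : ℝ, 1 < α → ∀ β : Fin K → ℝ, (∀ k, 0 ≤ β k) → β ≠ 0 →
      ∀ k, I (α • β) k < α * I β k) ∧
    (∀ β₁ β₂ : Fin K → ℝ, (∀ k, 0 ≤ β₂ k) → (∀ k, β₂ k ≤ β₁ k) →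
      ∀ k, I β₂ k ≤ I β₁ k) := by
  have hpd : ∀ (β : Fin K → ℝ), (∀ j, 0 ≤ β j) → ∀ k, (C β k).PosDef := by
    intro β hβ k
    rw [hC]
    refine Matrix.PosDef.add_posSemidef (Matrix.PosDef.add_posSemidef Matrix.PosDef.one ?_) ?_
    · exact sum_psd fun m _ => smul_psd (hlampos m β hβ).le (stdBasis_psd m)
    · exact sum_psd fun j _ => smul_psd (hβ j) (vecMulVec_psd (h j))
  have hqpos : ∀ (β : Fin K → ℝ) (_ : ∀ j, 0 ≤ β j) (k : Fin K),
      0 < (star (h k) ⬝ᵥ ((C β k)⁻¹ *ᵥ h k)).re := by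
    intro β hβ k
    have := ((hpd β hβ k).inv).re_dotProduct_pos (hh k)
    simpa using this
  refine ⟨?_, ?_, ?_⟩
  · intro β hβ k
    rw [hI]
    exact div_pos (hγ k) (hqpos β hβ k)
  · intro α hα β hβ hβ0 k
    have hαβ : ∀ j, 0 ≤ (α • β) j := fun j => by
      have := hβ j; have : 0 ≤ α * β j := mul_nonneg (by linarith) (hβ j)
      simpa using this
    have hA := hpd (α • β) hαβ k
    have hB := hpd β hβ k
    have hB' : ((α : ℂ) • C β k).PosDef := smul_pd (by linarith) hB
    have hdiff : ((α : ℂ) • C β k - C (α • β) k).PosDef := by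
      have heq : (α : ℂ) • C β k - C (α • β) k
          = ((α - 1 : ℝ) : ℂ) • (1 : Matrix (Fin M) (Fin M) ℂ)
            + ∑ m, (((α * lam m β - lam m (α • β)) : ℝ) : ℂ) •
                Matrix.single m m (1 : ℂ) := by
        rw [hC, hC]
        push_cast
        rw [smul_add, smul_add, Finset.smul_sum, Finset.smul_sum]
        simp only [smul_smul, sub_smul, one_smul, Pi.smul_apply, smul_eq_mul]
        push_cast
        rw [Finset.sum_sub_distrib]
        abel
      rw [heq]
      refine Matrix.PosDef.add_posSemidef (smul_pd (by linarith) Matrix.PosDef.one) ?_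
      exact sum_psd fun m _ => smul_psd
        (by have := hlamsub m α hα β hβ hβ0; linarith) (stdBasis_psd m)
    have hlt := quad_inv_lt hA hB' hdiff (hh k)
    have hα0 : (α : ℂ) ≠ 0 := Complex.ofReal_ne_zero.mpr (by linarith)
    have hBd : IsUnit (C β k).det := (C β k).isUnit_iff_isUnit_det.mp hB.isUnit
    have hinv : ((α : ℂ) • C β k)⁻¹ = (α : ℂ)⁻¹ • (C β k)⁻¹ := by
      letI : Invertible (α : ℂ) := invertibleOfNonzero hα0
      rw [Matrix.inv_smul (C β k) (α : ℂ) hBd, invOf_eq_inv (α : ℂ)]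
    rw [hinv, smul_mulVec, dotProduct_smul, smul_eq_mul] at hlt
    have hre := (Complex.lt_def.mp hlt).1
    rw [show ((α : ℂ)⁻¹) = ((α⁻¹ : ℝ) : ℂ) by push_cast; ring] at hre
    rw [Complex.re_ofReal_mul] at hre
    set q1 := (star (h k) ⬝ᵥ ((C (α • β) k)⁻¹ *ᵥ h k)).re with hq1
    set q0 := (star (h k) ⬝ᵥ ((C β k)⁻¹ *ᵥ h k)).re with hq0
    have h0 : 0 < q0 := hqpos β hβ k
    have h1 : 0 < q1 := hqpos _ hαβ k
    rw [hI, hI]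
    have key : γ k / q1 < γ k / (α⁻¹ * q0) :=
      div_lt_div_of_pos_left (hγ k) (by positivity) hre
    have : γ k / (α⁻¹ * q0) = α * (γ k / q0) := by
      field_simp
    rw [this] at key
    exact key
  · intro β₁ β₂ hβ₂ hle k
    have hβ₁ : ∀ j, 0 ≤ β₁ j := fun j => le_trans (hβ₂ j) (hle j)
    have hA := hpd β₂ hβ₂ k
    have hB := hpd β₁ hβ₁ k
    have hdiff : (C β₁ k - C β₂ k).PosSemidef := by
      have heq : C β₁ k - C β₂ k
          = (∑ m, (((lam m β₁ - lam m β₂) : ℝ) : ℂ) • Matrix.single m m (1 : ℂ))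
            + ∑ j ∈ Finset.univ.erase k, (((β₁ j - β₂ j) : ℝ) : ℂ) •
                vecMulVec (h j) (star (h j)) := by
        rw [hC, hC]
        push_cast
        simp only [sub_smul]
        rw [Finset.sum_sub_distrib, Finset.sum_sub_distrib]
        abel
      rw [heq]
      exact (sum_psd fun m _ => smul_psd
          (by have := hlammono m β₁ β₂ hβ₂ hle; linarith) (stdBasis_psd m)).add
        (sum_psd fun j _ => smul_psd (by have := hle j; have := hβ₂ j; linarith)
          (vecMulVec_psd (h j)))
    have hle' := quad_inv_le hA hB hdiff (h k)
    have hre := (Complex.le_def.mp hle').1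
    rw [hI, hI]
    have h1 : 0 < (star (h k) ⬝ᵥ ((C β₁ k)⁻¹ *ᵥ h k)).re := hqpos β₁ hβ₁ k
    gcongr
    exact (hγ k).le
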